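/- Fix a constant c > 0, let n be sufficiently large, and suppose d₀ := c·√(log n) is an integer. Let w be a uniformly random binary word of length n. Let t₀ be the smallest integer t with 4^t ≥ log n and t₁ the largest integer t with 4^t ≤ √n. For integers t and j ≥ 0, let E_{t,≥j} be the event |w[1,4^t]|₁ ≥ 2^(2t−1) + 2^t·d₀ + j, let E_t = E_{t,≥0}, let E_{≤t} = E_{t₀} ∩ E_{t₀+1} ∩ … ∩ E_t (with E_{≤t₀−1} the full event), and let β_t = exp(−2^(3−t)·d₀/3). Then for all t ∈ [t₀, t₁] and all integers j ≥ 0: P(E_{≤t−1} ∩ E_{t,≥j}) ≤ n^(−2c²(t−t₀+1)/3) · β_t^j / (1 − β_t). -/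

import Mathlib

/-!
Induction on `t`. Put `θ_t = 2^(2t-1) + 2^t d₀` and `λ = 4d₀/(3·2^t)`, so that `e^(-λ) = β_(t+1)`
and `β_t = β_(t+1)²`. Split a word of length `4^(t+1)` into a prefix `u` of length `4^t` and a
suffix `v` of length `3·4^t`. On `E_(≤t) ∩ E_(t+1,≥j)` the prefix lies in `E_(≤t)` and
`|u|₁ + |v|₁ ≥ θ_(t+1) + j`, so the exponential Markov inequality bounds the probability by
`E[1_(E_(≤t))(u) e^(λ(|u|₁ - θ_t))] · e^(-λ(θ_(t+1) + j - θ_t)) · E[e^(λ|v|₁)]`.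
Hoeffding's lemma for a fair coin, `(1 + e^λ)/2 ≤ e^(λ/2 + λ²/8)`, bounds the last factor, and
summation by parts turns the tail bounds `e^(-2d₀²(t-t₀+1)/3) β_t^i / (1 - β_t)` of the induction
hypothesis into `e^(-2d₀²(t-t₀+1)/3) / (1 - β_(t+1))` for the first, since `e^λ β_t = β_(t+1) < 1`.
The exponents combine to exactly `e^(-2d₀²/3) β_(t+1)^j`. The base case `t = t₀` is the plain
Chernoff bound.
-/

/-- Number of ones of the infinite binary word `w` in the 0-indexed
half-open interval of positions `[a, b)`. Thus `cnt w 0 k` is the number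
of 1s in the prefix of length `k` (i.e. `|w[1,k]|₁`). -/
def cnt (w : ℕ → Bool) (a b : ℕ) : ℕ :=
  ((Finset.Ico a b).filter (fun i => w i = true)).card

/-- Extend a binary word of length `n` to an infinite word by `false`s. -/
def ext {n : ℕ} (w : Fin n → Bool) : ℕ → Bool :=
  fun i => if h : i < n then w ⟨i, h⟩ else false

/-- `β_t = exp(-2^(3-t) d₀ / 3)`. -/
noncomputable def beta (t d0 : ℕ) : ℝ :=
  Real.exp (-(8 * (d0 : ℝ) / (2 : ℝ) ^ t) / 3)

open Finset hiding ext
open Real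

theorem one_add_exp_le_two_mul_exp (x : ℝ) : 1 + exp x ≤ 2 * exp (x / 2 + x ^ 2 / 8) := by
  have hsq : exp x = exp (x / 2) * exp (x / 2) := by rw [← exp_add]; ring_nf
  have hinv : exp (x / 2) * exp (-(x / 2)) = 1 := by rw [← exp_add]; simp
  have hcosh : 1 + exp x = 2 * exp (x / 2) * cosh (x / 2) := by
    rw [cosh_eq]
    linear_combination hsq - hinv
  have hquad : cosh (x / 2) ≤ exp (x ^ 2 / 8) := by
    convert cosh_le_exp_half_sq (x / 2) using 2
    ring
  rw [hcosh, exp_add, mul_assoc]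
  gcongr

theorem sum_pow_le_of_card_filter_le {ι : Type*} (S : Finset ι) (X : ι → ℕ) {x r B : ℝ}
    (hx : 1 ≤ x) (hr : 0 ≤ r) (hxr : x * r < 1)
    (htail : ∀ i, (#{u ∈ S | i ≤ X u} : ℝ) ≤ B * r ^ i) :
    ∑ u ∈ S, x ^ X u ≤ B * (1 - r) / (1 - x * r) := by
  set N := S.sup X
  have hcardS : (#S : ℝ) ≤ B := by simpa using htail 0
  have hexpand : ∀ u ∈ S,
      x ^ X u = 1 + ∑ i ∈ range N, if i + 1 ≤ X u then x ^ (i + 1) - x ^ i else 0 := by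
    intro u hu
    have hrange : {i ∈ range N | i + 1 ≤ X u} = range (X u) := by
      ext i
      have := le_sup (f := X) hu
      simp only [mem_filter, mem_range]
      omega
    rw [← sum_filter, hrange, sum_range_sub (x ^ ·)]
    ring
  have hlayer : ∀ i ∈ range N, (∑ u ∈ S, if i + 1 ≤ X u then x ^ (i + 1) - x ^ i else 0)
      ≤ B * ((x - 1) * r) * (x * r) ^ i := by
    intro i _
    rw [← sum_filter, sum_const, nsmul_eq_mul]
    calc (#{u ∈ S | i + 1 ≤ X u} : ℝ) * (x ^ (i + 1) - x ^ i)
        ≤ B * r ^ (i + 1) * (x ^ (i + 1) - x ^ i) := by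
          gcongr
          · exact sub_nonneg.2 (pow_le_pow_right₀ hx i.le_succ)
          · exact htail _
      _ = B * ((x - 1) * r) * (x * r) ^ i := by ring
  have hB : 0 ≤ B * ((x - 1) * r) := by
    have : 0 ≤ B := (Nat.cast_nonneg _).trans hcardS
    have : 0 ≤ x - 1 := by linarith
    positivity
  calc ∑ u ∈ S, x ^ X u
      = #S + ∑ i ∈ range N, ∑ u ∈ S, if i + 1 ≤ X u then x ^ (i + 1) - x ^ i else 0 := by
        rw [sum_congr rfl hexpand, sum_add_distrib, sum_comm]
        simp
    _ ≤ B + B * ((x - 1) * r) * ∑ i ∈ range N, (x * r) ^ i := by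
        rw [mul_sum]
        exact add_le_add hcardS (sum_le_sum hlayer)
    _ ≤ B + B * ((x - 1) * r) * (1 / (1 - x * r)) := by
        have hgeom : ∑ i ∈ range N, (x * r) ^ i ≤ 1 / (1 - x * r) := by
          simpa using
            geom_sum_Ico_le_of_lt_one (m := 0) (n := N) (mul_nonneg (by linarith) hr) hxr
        linarith [mul_le_mul_of_nonneg_left hgeom hB]
    _ = B * (1 - r) / (1 - x * r) := by
        field_simp [(sub_pos.2 hxr).ne']
        ring

namespace BinaryWord

def ones {m : ℕ} (u : Fin m → Bool) : ℕ := ∑ i, (u i).toNat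

theorem ones_append {a b : ℕ} (u : Fin a → Bool) (v : Fin b → Bool) :
    ones (Fin.append u v) = ones u + ones v := by
  simp [ones, Fin.sum_univ_add]

theorem cnt_ext {m : ℕ} (u : Fin m → Bool) : cnt (ext u) 0 m = ones u := by
  rw [cnt, card_filter, Nat.Ico_zero_eq_range, sum_range, ones]
  refine sum_congr rfl fun i _ => ?_
  simp [ext, Bool.toNat]

theorem ext_append_of_lt {a b : ℕ} (u : Fin a → Bool) (v : Fin b → Bool) {i : ℕ} (hi : i < a) :
    ext (Fin.append u v) i = ext u i := by
  simp only [ext, hi, Nat.lt_add_right b hi, dite_true]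
  exact Fin.append_left u v ⟨i, hi⟩

theorem cnt_congr {f g : ℕ → Bool} {k : ℕ} (h : ∀ i < k, f i = g i) : cnt f 0 k = cnt g 0 k := by
  unfold cnt
  congr 1
  exact filter_congr fun i hi => by rw [h i (mem_Ico.1 hi).2]

theorem sum_exp_mul_ones (b : ℕ) (l : ℝ) :
    ∑ v : Fin b → Bool, exp (l * ones v) = (1 + exp l) ^ b := by
  have hprod : ∀ v : Fin b → Bool, exp (l * ones v) = ∏ i, exp (l * (v i).toNat) := by
    intro v
    rw [ones, Nat.cast_sum, mul_sum, exp_sum]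
  simp_rw [hprod, ← Fintype.prod_sum (fun (_ : Fin b) (x : Bool) => exp (l * x.toNat))]
  simp [add_comm]

theorem card_ones_ge_le (b : ℕ) {l : ℝ} (hl : 0 ≤ l) (x : ℝ) :
    (#{v : Fin b → Bool | x ≤ ones v} : ℝ) ≤ 2 ^ b * exp (b * (l / 2 + l ^ 2 / 8) - l * x) := by
  have hmarkov : ∀ v : Fin b → Bool,
      (if x ≤ ones v then 1 else 0 : ℝ) ≤ exp (-(l * x)) * exp (l * ones v) := by
    intro v
    rw [← exp_add]
    split_ifs with hv
    · exact one_le_exp (by nlinarith)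
    · positivity
  calc (#{v : Fin b → Bool | x ≤ ones v} : ℝ)
      ≤ ∑ v : Fin b → Bool, exp (-(l * x)) * exp (l * ones v) := by
        rw [card_filter, Nat.cast_sum]
        exact sum_le_sum fun v _ => by simpa using hmarkov v
    _ = exp (-(l * x)) * (1 + exp l) ^ b := by rw [← mul_sum, sum_exp_mul_ones]
    _ ≤ exp (-(l * x)) * (2 * exp (l / 2 + l ^ 2 / 8)) ^ b := by
        gcongr
        exact one_add_exp_le_two_mul_exp l
    _ = 2 ^ b * exp (b * (l / 2 + l ^ 2 / 8) - l * x) := by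
        rw [mul_pow, ← exp_nat_mul, sub_eq_add_neg, exp_add]
        ring

theorem card_le_sum_card_append {α : Type*} [Fintype α] {a b : ℕ}
    {P : (Fin (a + b) → α) → Prop} [DecidablePred P] {S : Finset (Fin a → α)}
    {R : (Fin a → α) → (Fin b → α) → Prop} [∀ u, DecidablePred (R u)]
    (h : ∀ u v, P (Fin.append u v) → u ∈ S ∧ R u v) :
    #{w | P w} ≤ ∑ u ∈ S, #{v | R u v} := by
  have hsplit : #{w | P w} = ∑ u, #{v | P (Fin.append u v)} := by
    simp only [card_filter]
    rw [← Fintype.sum_equiv (Fin.appendEquiv a b) _ _ fun _ => rfl, Fintype.sum_prod_type]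
    rfl
  rw [hsplit, ← sum_subset (subset_univ S)]
  · exact sum_le_sum fun u _ => card_le_card (monotone_filter_right _ fun v _ hv => (h u v hv).2)
  · intro u _ hu
    rw [card_eq_zero, filter_eq_empty_iff]
    exact fun v _ hv => hu (h u v hv).1

noncomputable def wordDensity (m : ℕ) (Q : (ℕ → Bool) → Prop) : ℝ :=
  {w : Fin m → Bool | Q (ext w)}.ncard / 2 ^ m

theorem wordDensity_eq_card (m : ℕ) (Q : (ℕ → Bool) → Prop)
    [DecidablePred fun w : Fin m → Bool => Q (ext w)] :
    wordDensity m Q = #{w : Fin m → Bool | Q (ext w)} / 2 ^ m := by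
  rw [wordDensity, Set.ncard_eq_toFinset_card', Set.toFinset_ofPred]

theorem wordDensity_le_of_dependsOn {L m : ℕ} (hLm : L ≤ m) {Q : (ℕ → Bool) → Prop}
    (hQ : DependsOn Q (Set.Iio L)) : wordDensity m Q ≤ wordDensity L Q := by
  classical
  obtain ⟨k, rfl⟩ := Nat.exists_eq_add_of_le hLm
  have hcard : #{w : Fin (L + k) → Bool | Q (ext w)} ≤
      ∑ _u ∈ {u : Fin L → Bool | Q (ext u)}, #{_v : Fin k → Bool | True} :=
    card_le_sum_card_append fun u v hw =>
      ⟨by simpa [← hQ fun i hi => ext_append_of_lt u v hi] using hw, trivial⟩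
  rw [wordDensity_eq_card, wordDensity_eq_card, div_le_div_iff₀ (by positivity) (by positivity)]
  calc (#{w : Fin (L + k) → Bool | Q (ext w)} : ℝ) * 2 ^ L
      ≤ #{u : Fin L → Bool | Q (ext u)} * 2 ^ k * 2 ^ L := by
        gcongr
        exact_mod_cast (by simpa using hcard)
    _ = #{u : Fin L → Bool | Q (ext u)} * 2 ^ (L + k) := by ring

def threshold (d0 t : ℕ) : ℕ := 2 ^ (2 * t - 1) + 2 ^ t * d0

/-- The paper's `E_{≤t-1} ∩ E_{t,≥j}`. -/
def event (d0 t0 t j : ℕ) (f : ℕ → Bool) : Prop :=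
  (∀ s, t0 ≤ s → s < t → threshold d0 s ≤ cnt f 0 (4 ^ s)) ∧ threshold d0 t + j ≤ cnt f 0 (4 ^ t)

noncomputable def tailBound (d0 t0 t j : ℕ) : ℝ :=
  exp (-(2 * d0 ^ 2 * ((t : ℝ) - t0 + 1)) / 3) * beta t d0 ^ j / (1 - beta t d0)

theorem event_dependsOn (d0 t0 t j : ℕ) : DependsOn (event d0 t0 t j) (Set.Iio (4 ^ t)) := by
  intro f g hfg
  have hcnt : ∀ k ≤ 4 ^ t, cnt f 0 k = cnt g 0 k := fun k hk =>
    cnt_congr fun i hi => hfg i (lt_of_lt_of_le hi hk)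
  have hpow : ∀ s < t, 4 ^ s ≤ 4 ^ t := fun s hs => Nat.pow_le_pow_right (by norm_num) hs.le
  simp only [event]
  apply propext
  refine and_congr (forall_congr' fun s => forall_congr' fun _ => forall_congr' fun hs => ?_) ?_
  · rw [hcnt _ (hpow s hs)]
  · rw [hcnt _ le_rfl]

theorem event_zero_of_event_succ {d0 t0 t j : ℕ} (ht0 : t0 ≤ t) {f : ℕ → Bool}
    (hf : event d0 t0 (t + 1) j f) : event d0 t0 t 0 f :=
  ⟨fun s hs hst => hf.1 s hs (by omega), hf.1 t ht0 (by omega)⟩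

theorem beta_lt_one {d0 : ℕ} (hd : 0 < d0) (t : ℕ) : beta t d0 < 1 := by
  rw [beta, exp_lt_one_iff, neg_div, neg_lt_zero]
  positivity

theorem beta_succ (d0 t : ℕ) : beta (t + 1) d0 = exp (-(4 * d0 / (3 * 2 ^ t))) := by
  rw [beta, pow_succ]
  ring_nf

theorem beta_eq_beta_succ_sq (d0 t : ℕ) : beta t d0 = beta (t + 1) d0 ^ 2 := by
  rw [beta_succ, ← exp_nat_mul, beta]
  field_simp
  ring_nf

theorem cast_threshold (d0 : ℕ) {t : ℕ} (ht : 0 < t) :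
    (threshold d0 t : ℝ) = (2 ^ t) ^ 2 / 2 + 2 ^ t * d0 := by
  have hpow : ((2 : ℝ) ^ t) ^ 2 = 2 ^ (2 * t - 1) * 2 := by
    rw [← pow_mul, ← pow_succ]
    congr 1
    omega
  rw [threshold, hpow]
  push_cast
  ring

theorem four_pow_eq_sq (t : ℕ) : (4 : ℝ) ^ t = (2 ^ t) ^ 2 := by
  rw [← pow_mul, mul_comm, pow_mul]
  norm_num

theorem wordDensity_event_base_le {d0 t0 : ℕ} (hd : 0 < d0) (ht0 : 0 < t0) (j : ℕ) :
    wordDensity (4 ^ t0) (event d0 t0 t0 j) ≤ tailBound d0 t0 t0 j := by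
  classical
  have hsub : #{u : Fin (4 ^ t0) → Bool | event d0 t0 t0 j (ext u)} ≤
      #{v : Fin (4 ^ t0) → Bool | ((threshold d0 t0 + j : ℕ) : ℝ) ≤ ones v} :=
    card_le_card <| monotone_filter_right _ fun u _ hu => by
      exact_mod_cast cnt_ext u ▸ hu.2
  -- Chernoff with the optimal parameter `λ = 4 d₀ / 2 ^ t₀`.
  have hl : 0 ≤ (4 * d0 / 2 ^ t0 : ℝ) := by positivity
  have hexp : ((4 ^ t0 : ℕ) : ℝ) * ((4 * d0 / 2 ^ t0) / 2 + (4 * d0 / 2 ^ t0) ^ 2 / 8)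
      - 4 * d0 / 2 ^ t0 * ((threshold d0 t0 + j : ℕ) : ℝ)
      = -(2 * d0 ^ 2) + j * -(4 * d0 / 2 ^ t0) := by
    push_cast [cast_threshold d0 ht0, four_pow_eq_sq]
    field_simp
    ring
  have hβ : exp (-(4 * d0 / 2 ^ t0)) ≤ beta t0 d0 := by
    rw [beta, exp_le_exp, neg_div, neg_le_neg_iff, div_le_iff₀ three_pos, mul_div_assoc,
      mul_div_assoc]
    nlinarith [(by positivity : (0 : ℝ) ≤ d0 / 2 ^ t0)]
  have hβ0 : 0 ≤ beta t0 d0 := (exp_pos _).le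
  have hβ1 : 0 < 1 - beta t0 d0 := sub_pos.2 (beta_lt_one hd t0)
  rw [wordDensity_eq_card, div_le_iff₀ (by positivity)]
  calc (#{u : Fin (4 ^ t0) → Bool | event d0 t0 t0 j (ext u)} : ℝ)
      ≤ #{v : Fin (4 ^ t0) → Bool | ((threshold d0 t0 + j : ℕ) : ℝ) ≤ ones v} := by
        exact_mod_cast hsub
    _ ≤ 2 ^ 4 ^ t0 * exp (-(2 * d0 ^ 2) + j * -(4 * d0 / 2 ^ t0)) := by
        rw [← hexp]
        exact card_ones_ge_le (4 ^ t0) hl _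
    _ = exp (-(2 * d0 ^ 2)) * exp (-(4 * d0 / 2 ^ t0)) ^ j * 2 ^ 4 ^ t0 := by
        rw [exp_add, exp_nat_mul]
        ring
    _ ≤ exp (-(2 * d0 ^ 2 * ((t0 : ℝ) - t0 + 1)) / 3) * beta t0 d0 ^ j / (1 - beta t0 d0)
          * 2 ^ 4 ^ t0 := by
        gcongr
        refine (mul_le_mul (exp_le_exp.2 ?_) (pow_le_pow_left₀ (exp_pos _).le hβ j)
          (by positivity) (exp_pos _).le).trans (le_div_self (by positivity) hβ1 (by linarith))
        nlinarith [sq_nonneg (d0 : ℝ)]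

open Classical in
theorem sum_exp_pow_ones_sub_le {d0 t0 t : ℕ} (hd : 0 < d0)
    (ih : ∀ i, wordDensity (4 ^ t) (event d0 t0 t i) ≤ tailBound d0 t0 t i) :
    ∑ u : Fin (4 ^ t) → Bool with event d0 t0 t 0 (ext u),
        exp (4 * d0 / (3 * 2 ^ t)) ^ (ones u - threshold d0 t)
      ≤ 2 ^ 4 ^ t * exp (-(2 * d0 ^ 2 * ((t : ℝ) - t0 + 1)) / 3) / (1 - beta (t + 1) d0) := by
  set β := beta (t + 1) d0 with hβ
  set E := exp (-(2 * d0 ^ 2 * ((t : ℝ) - t0 + 1)) / 3)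
  have hβ0 : 0 < β := exp_pos _
  have hβ1 : β < 1 := beta_lt_one hd _
  have hx : exp (4 * d0 / (3 * 2 ^ t)) = β⁻¹ := by rw [hβ, beta_succ, exp_neg, inv_inv]
  set S : Finset (Fin (4 ^ t) → Bool) := {u | event d0 t0 t 0 (ext u)}
  have htail : ∀ i, (#(S.filter fun u => i ≤ ones u - threshold d0 t) : ℝ) ≤
      2 ^ 4 ^ t * E / (1 - β ^ 2) * (β ^ 2) ^ i := by
    intro i
    have hsub : S.filter (fun u => i ≤ ones u - threshold d0 t) ⊆
        ({u | event d0 t0 t i (ext u)} : Finset (Fin (4 ^ t) → Bool)) := by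
      intro u hu
      simp only [S, mem_filter, mem_univ, true_and, event, cnt_ext] at hu ⊢
      obtain ⟨⟨hprev, hθ⟩, hi⟩ := hu
      exact ⟨hprev, by omega⟩
    have hdensity := ih i
    rw [wordDensity_eq_card, div_le_iff₀ (by positivity)] at hdensity
    calc _ ≤ (#{u : Fin (4 ^ t) → Bool | event d0 t0 t i (ext u)} : ℝ) := by
          exact_mod_cast card_le_card hsub
      _ ≤ _ := hdensity
      _ = 2 ^ 4 ^ t * E / (1 - β ^ 2) * (β ^ 2) ^ i := by
          rw [tailBound, beta_eq_beta_succ_sq]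
          ring
  rw [hx]
  calc _ ≤ 2 ^ 4 ^ t * E / (1 - β ^ 2) * (1 - β ^ 2) / (1 - β⁻¹ * β ^ 2) :=
        sum_pow_le_of_card_filter_le _ _ (one_le_inv₀ hβ0 |>.2 hβ1.le) (sq_nonneg β)
          (by rw [sq, ← mul_assoc, inv_mul_cancel₀ hβ0.ne', one_mul]; exact hβ1) htail
    _ = 2 ^ 4 ^ t * E / (1 - β) := by
        have hβ2 : 1 - β ^ 2 ≠ 0 := by nlinarith
        have hβ3 : β⁻¹ * β ^ 2 = β := by field_simp
        rw [hβ3, div_mul_cancel₀ _ hβ2]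

open Classical in
theorem card_event_succ_le_sum {d0 t0 t : ℕ} (ht0 : t0 ≤ t) (j : ℕ) :
    #{w : Fin (4 ^ t + 3 * 4 ^ t) → Bool | event d0 t0 (t + 1) j (ext w)} ≤
      ∑ u : Fin (4 ^ t) → Bool with event d0 t0 t 0 (ext u),
        #{v : Fin (3 * 4 ^ t) → Bool |
          ((threshold d0 (t + 1) + j : ℕ) : ℝ) - ones u ≤ ones v} := by
  refine card_le_sum_card_append fun u v hw => ⟨?_, ?_⟩
  · have hprefix := event_dependsOn d0 t0 t 0 fun i hi => ext_append_of_lt u v hi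
    simpa [← hprefix] using event_zero_of_event_succ ht0 hw
  · have hK := hw.2
    rw [show 4 ^ (t + 1) = 4 ^ t + 3 * 4 ^ t by ring, cnt_ext, ones_append] at hK
    rw [sub_le_iff_le_add']
    exact_mod_cast hK

theorem wordDensity_event_succ_le {d0 t0 t : ℕ} (hd : 0 < d0) (ht : 0 < t) (ht0 : t0 ≤ t)
    (ih : ∀ i, wordDensity (4 ^ t) (event d0 t0 t i) ≤ tailBound d0 t0 t i) (j : ℕ) :
    wordDensity (4 ^ (t + 1)) (event d0 t0 (t + 1) j) ≤ tailBound d0 t0 (t + 1) j := by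
  classical
  set l : ℝ := 4 * d0 / (3 * 2 ^ t) with hl
  set K := threshold d0 (t + 1) + j
  set A := ((3 * 4 ^ t : ℕ) : ℝ) * (l / 2 + l ^ 2 / 8) - l * (K - threshold d0 t)
  have hl0 : 0 ≤ l := by positivity
  have hchernoff : ∀ u ∈ ({u | event d0 t0 t 0 (ext u)} : Finset (Fin (4 ^ t) → Bool)),
      (#{v : Fin (3 * 4 ^ t) → Bool | (K : ℝ) - ones u ≤ ones v} : ℝ) ≤
        2 ^ (3 * 4 ^ t) * exp A * exp l ^ (ones u - threshold d0 t) := by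
    intro u hu
    have hθ : threshold d0 t ≤ ones u := by
      simpa [cnt_ext] using (mem_filter.1 hu).2.2
    rw [← exp_nat_mul, mul_assoc, ← exp_add, Nat.cast_sub hθ]
    convert card_ones_ge_le (3 * 4 ^ t) hl0 ((K : ℝ) - ones u) using 3
    ring
  have hexp : A = -(2 * d0 ^ 2) / 3 + j * -l := by
    simp only [A, K, hl]
    push_cast [cast_threshold d0 ht, cast_threshold d0 (by omega : 0 < t + 1), four_pow_eq_sq]
    field_simp
    ring
  have hE : exp (-(2 * d0 ^ 2 * (((t + 1 : ℕ) : ℝ) - t0 + 1)) / 3) =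
      exp (-(2 * d0 ^ 2) / 3) * exp (-(2 * d0 ^ 2 * ((t : ℝ) - t0 + 1)) / 3) := by
    rw [← exp_add]
    push_cast
    ring_nf
  have hβ : beta (t + 1) d0 = exp (-l) := beta_succ d0 t
  rw [show 4 ^ (t + 1) = 4 ^ t + 3 * 4 ^ t by ring, wordDensity_eq_card,
    div_le_iff₀ (by positivity)]
  calc (#{w : Fin (4 ^ t + 3 * 4 ^ t) → Bool | event d0 t0 (t + 1) j (ext w)} : ℝ)
      ≤ ∑ u : Fin (4 ^ t) → Bool with event d0 t0 t 0 (ext u),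
          2 ^ (3 * 4 ^ t) * exp A * exp l ^ (ones u - threshold d0 t) :=
        (Nat.cast_le.2 (card_event_succ_le_sum ht0 j)).trans
          (by rw [Nat.cast_sum]; exact sum_le_sum hchernoff)
    _ = 2 ^ (3 * 4 ^ t) * exp A * ∑ u : Fin (4 ^ t) → Bool with event d0 t0 t 0 (ext u),
          exp l ^ (ones u - threshold d0 t) := by rw [mul_sum]
    _ ≤ 2 ^ (3 * 4 ^ t) * exp A *
          (2 ^ 4 ^ t * exp (-(2 * d0 ^ 2 * ((t : ℝ) - t0 + 1)) / 3) / (1 - beta (t + 1) d0)) := by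
        gcongr
        exact sum_exp_pow_ones_sub_le hd ih
    _ = tailBound d0 t0 (t + 1) j * 2 ^ (4 ^ t + 3 * 4 ^ t) := by
        rw [hexp, tailBound, hE, exp_add, exp_nat_mul, ← hβ, pow_add]
        ring

theorem wordDensity_event_le {d0 t0 : ℕ} (hd : 0 < d0) (ht0 : 0 < t0) {t : ℕ} (ht : t0 ≤ t)
    (j : ℕ) : wordDensity (4 ^ t) (event d0 t0 t j) ≤ tailBound d0 t0 t j := by
  induction t, ht using Nat.le_induction generalizing j with
  | base => exact wordDensity_event_base_le hd ht0 j
  | succ t ht ih => exact wordDensity_event_succ_le hd (by omega) ht ih j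

end BinaryWord

open BinaryWord

/-- Fix `c > 0`, let `n` be sufficiently large, and suppose
`d₀ = c √(log n)` is an integer. Let `w` be a uniformly random binary word of
length `n` (so probabilities are `#{favourable words} / 2^n`). Let `t₀` be the
smallest integer `t` with `4^t ≥ log n` and `t₁` the largest integer `t` with
`4^t ≤ √n`. For `j ≥ 0` let `E_{t,≥j}` be the event
`|w[1,4^t]|₁ ≥ 2^(2t-1) + 2^t d₀ + j`, and let
`E_{≤ t-1} = E_{t₀,≥0} ∩ ⋯ ∩ E_{t-1,≥0}`. Then for all `t₀ ≤ t ≤ t₁` and all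
`j ≥ 0`:
`P(E_{≤ t-1} ∩ E_{t,≥j}) ≤ n^(-2c²(t-t₀+1)/3) β_t^j / (1 - β_t)`,
where `β_t = exp(-2^(3-t) d₀ / 3)`. Logarithms are natural. -/
theorem pnf_upper_bound_claim (c : ℝ) (hc : 0 < c) :
    ∃ N : ℕ, ∀ n : ℕ, N ≤ n →
      ∀ d0 : ℕ, (d0 : ℝ) = c * Real.sqrt (Real.log n) →
      ∀ t0 : ℕ, (Real.log n ≤ (4 : ℝ) ^ t0 ∧
          ∀ s : ℕ, s < t0 → (4 : ℝ) ^ s < Real.log n) →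
      ∀ t1 : ℕ, ((4 : ℝ) ^ t1 ≤ Real.sqrt n ∧
          ∀ s : ℕ, (4 : ℝ) ^ s ≤ Real.sqrt n → s ≤ t1) →
      ∀ t : ℕ, t0 ≤ t → t ≤ t1 → ∀ j : ℕ,
        (Set.ncard {w : Fin n → Bool |
            (∀ s : ℕ, t0 ≤ s → s < t →
              2 ^ (2 * s - 1) + 2 ^ s * d0 ≤ cnt (ext w) 0 (4 ^ s)) ∧
            2 ^ (2 * t - 1) + 2 ^ t * d0 + j ≤ cnt (ext w) 0 (4 ^ t)} : ℝ)
            / 2 ^ n ≤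
          (n : ℝ) ^ (-(2 * c ^ 2 * ((t : ℝ) - (t0 : ℝ) + 1)) / 3) *
            (beta t d0) ^ j / (1 - beta t d0) := by
  refine ⟨3, fun n hn d0 hd0 t0 ⟨ht0, _⟩ t1 ⟨ht1, _⟩ t ht0t htt1 j => ?_⟩
  have hn3 : (3 : ℝ) ≤ n := by exact_mod_cast hn
  have hlog : 1 < Real.log n := by
    rw [Real.lt_log_iff_exp_lt (by positivity)]
    linarith [Real.exp_one_lt_d9]
  have hd : 0 < d0 := by
    have : (0 : ℝ) < d0 := hd0 ▸ mul_pos hc (Real.sqrt_pos.2 (by linarith))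
    exact_mod_cast this
  have ht0pos : 0 < t0 := by
    rcases Nat.eq_zero_or_pos t0 with rfl | h
    · norm_num at ht0; linarith
    · exact h
  have h4t : 4 ^ t ≤ n := by
    have : (4 : ℝ) ^ t ≤ n :=
      calc (4 : ℝ) ^ t ≤ 4 ^ t1 := pow_le_pow_right₀ (by norm_num) htt1
        _ ≤ √n := ht1
        _ ≤ n := (Real.sqrt_le_left (by positivity)).2 (by nlinarith)
    exact_mod_cast this
  calc _ = wordDensity n (event d0 t0 t j) := rfl
    _ ≤ wordDensity (4 ^ t) (event d0 t0 t j) :=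
        wordDensity_le_of_dependsOn h4t (event_dependsOn d0 t0 t j)
    _ ≤ tailBound d0 t0 t j := wordDensity_event_le hd ht0pos ht0t j
    _ = _ := by
        rw [tailBound, Real.rpow_def_of_pos (by positivity), hd0, mul_pow,
          Real.sq_sqrt (by positivity)]
        ring_nf
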